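/- Let κ be a positive definite kernel on Ω with native reproducing kernel Hilbert space N_κ, and let L(Ω) denote the span of point evaluation functionals δ_x, x ∈ Ω, in the dual of N_κ. Then a function f : Ω → ℝ belongs to N_κ if and only if there exists a constant C_f such that |λ(f)| ≤ C_f·‖λ‖_{N_κ*} for all λ ∈ L(Ω), and in that case ‖f‖_{N_κ} = sup_{λ ∈ L(Ω), λ≠0} λ(f)/‖λ‖_{N_κ*}. -/

import Mathlib

/-!
For `f = eval F` the reproducing property gives `∑ αⱼ f(xⱼ) = ⟪F, ∑ αⱼ κ(·,xⱼ)⟫`, so the bound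
holds with `C = ‖F‖` by Cauchy–Schwarz. Conversely, the bound makes `∑ αⱼ κ(·,xⱼ) ↦ ∑ αⱼ f(xⱼ)`
a well-defined bounded functional on the span of the kernel translates; Hahn–Banach extends it
to `H` and Riesz represents it by some `F`, whose values `⟪F, κ(·,x)⟫` are `f(x)`. The ratios
`⟪F, g⟫ / ‖g‖` are at most `‖F‖`, and they tend to `‖F‖` as `g → F` inside the dense span.
-/

open Set

/-- A kernel `κ` on `Ω` is positive definite. -/
def IsPosDefKernel {Ω : Type*} (κ : Ω → Ω → ℝ) : Prop :=
  ∀ (N : ℕ) (x : Fin N → Ω), Function.Injective x →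
    ∀ c : Fin N → ℝ, c ≠ 0 → 0 < ∑ i, ∑ j, c i * c j * κ (x i) (x j)

/-- A realization of the native space of a kernel `κ : Ω × Ω → ℝ`: a real Hilbert space `H`
of functions on `Ω` (via the injective linear evaluation map `eval`), containing the kernel
translates `κ(·,x)` (the `feature` vectors), in which the reproducing property
`⟨f, κ(·,x)⟩ = f(x)` holds and the span of the kernel translates is dense. -/
structure NativeSpace (Ω : Type*) (κ : Ω → Ω → ℝ) (H : Type*)
    [NormedAddCommGroup H] [InnerProductSpace ℝ H] [CompleteSpace H] where
  eval : H →ₗ[ℝ] (Ω → ℝ)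
  eval_injective : Function.Injective eval
  feature : Ω → H
  eval_feature : ∀ x y : Ω, eval (feature x) y = κ y x
  reproducing : ∀ (f : H) (x : Ω), (inner ℝ f (feature x) : ℝ) = eval f x
  dense_span : Dense ((Submodule.span ℝ (Set.range feature) : Submodule ℝ H) : Set H)

open scoped InnerProductSpace

theorem Finsupp.sum_eq_sum_fin {ι R M : Type*} [Zero R] [AddCommMonoid M] (l : ι →₀ R)
    (g : ι → R → M) :
    l.sum g = ∑ j : Fin l.support.card,
      g (l.support.equivFin.symm j) (l (l.support.equivFin.symm j)) := by
  rw [Finsupp.sum, ← Finset.sum_coe_sort, ← l.support.equivFin.symm.sum_comp]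

theorem Submodule.mem_span_range_iff_exists_fin_sum {ι R M : Type*} [Semiring R]
    [AddCommMonoid M] [Module R M] {v : ι → M} {g : M} :
    g ∈ Submodule.span R (Set.range v) ↔
      ∃ (N : ℕ) (α : Fin N → R) (x : Fin N → ι), ∑ j, α j • v (x j) = g := by
  rw [Finsupp.mem_span_range_iff_exists_finsupp]
  constructor
  · rintro ⟨l, rfl⟩
    exact ⟨_, _, _, (l.sum_eq_sum_fin fun i a => a • v i).symm⟩
  · rintro ⟨N, α, x, rfl⟩
    exact (Finsupp.mem_span_range_iff_exists_finsupp).1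
      (Submodule.sum_mem _ fun j _ => Submodule.smul_mem _ _ (Submodule.subset_span ⟨x j, rfl⟩))

theorem LinearMap.exists_comp_rangeRestrict_eq_of_ker_le {R M N P : Type*} [Ring R]
    [AddCommGroup M] [Module R M] [AddCommGroup N] [Module R N] [AddCommGroup P] [Module R P]
    (S : M →ₗ[R] N) (T : M →ₗ[R] P) (h : LinearMap.ker S ≤ LinearMap.ker T) :
    ∃ φ : LinearMap.range S →ₗ[R] P, φ ∘ₗ S.rangeRestrict = T := by
  refine ⟨(LinearMap.ker S).liftQ T h ∘ₗ S.quotKerEquivRange.symm.toLinearMap, ?_⟩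
  ext m
  have hm : S.quotKerEquivRange.symm (S.rangeRestrict m) = Submodule.Quotient.mk m := by
    rw [LinearEquiv.symm_apply_eq]
    exact Subtype.ext (S.quotKerEquivRange_apply_mk m).symm
  simp [hm]

theorem exists_inner_eq_of_abs_le_mul_norm {M E : Type*} [AddCommGroup M] [Module ℝ M]
    [NormedAddCommGroup E] [InnerProductSpace ℝ E] [CompleteSpace E]
    (S : M →ₗ[ℝ] E) (T : M →ₗ[ℝ] ℝ) (C : ℝ) (hT : ∀ m, |T m| ≤ C * ‖S m‖) :
    ∃ F : E, ∀ m, ⟪F, S m⟫_ℝ = T m := by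
  have hker : LinearMap.ker S ≤ LinearMap.ker T := fun m hm => by
    simpa [LinearMap.mem_ker.1 hm] using hT m
  obtain ⟨φ, hφ⟩ := S.exists_comp_rangeRestrict_eq_of_ker_le T hker
  have hφT : ∀ m, φ (S.rangeRestrict m) = T m := fun m => congr($hφ m)
  have hφC : ∀ g : LinearMap.range S, ‖φ g‖ ≤ C * ‖g‖ := by
    rintro ⟨_, m, rfl⟩
    have h := hT m
    rw [← hφT m] at h
    exact h
  obtain ⟨Φ, hΦ, -⟩ := exists_extension_norm_eq _ (φ.mkContinuous C hφC)
  refine ⟨(InnerProductSpace.toDual ℝ E).symm Φ, fun m => ?_⟩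
  rw [InnerProductSpace.toDual_symm_apply]
  exact (hΦ (S.rangeRestrict m)).trans (hφT m)

theorem exists_inner_eq_of_abs_sum_le {ι E : Type*} [NormedAddCommGroup E]
    [InnerProductSpace ℝ E] [CompleteSpace E] (v : ι → E) (f : ι → ℝ) (C : ℝ)
    (hf : ∀ (N : ℕ) (α : Fin N → ℝ) (x : Fin N → ι),
      |∑ j, α j * f (x j)| ≤ C * ‖∑ j, α j • v (x j)‖) :
    ∃ F : E, ∀ i, ⟪F, v i⟫_ℝ = f i := by
  obtain ⟨F, hF⟩ := exists_inner_eq_of_abs_le_mul_norm (Finsupp.linearCombination ℝ v)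
    (Finsupp.linearCombination ℝ f) C fun l => by
      simp only [Finsupp.linearCombination_apply, Finsupp.sum_eq_sum_fin, smul_eq_mul]
      exact hf _ _ _
  exact ⟨F, fun i => by simpa using hF (Finsupp.single i 1)⟩

theorem norm_eq_sSup_inner_div_norm {E : Type*} [NormedAddCommGroup E]
    [InnerProductSpace ℝ E] {s : Set E} (hs : Dense s) (F : E) :
    ‖F‖ = sSup ((fun g => ⟪F, g⟫_ℝ / ‖g‖) '' (s \ {0})) := by
  have hub : ‖F‖ ∈ upperBounds ((fun g => ⟪F, g⟫_ℝ / ‖g‖) '' (s \ {0})) := by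
    rintro _ ⟨g, ⟨-, hg⟩, rfl⟩
    exact div_le_of_le_mul₀ (norm_nonneg _) (norm_nonneg _) (real_inner_le_norm F g)
  rcases eq_or_ne F 0 with rfl | hF
  · rw [norm_zero] at hub ⊢
    refine le_antisymm (Real.sSup_nonneg ?_) (Real.sSup_le hub le_rfl)
    rintro _ ⟨g, -, rfl⟩
    simp
  have : Nontrivial E := ⟨⟨F, 0, hF⟩⟩
  have hcont : ContinuousAt (fun g => ⟪F, g⟫_ℝ / ‖g‖) F :=
    (continuous_const.inner continuous_id).continuousAt.div continuous_norm.continuousAt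
      (norm_ne_zero_iff.2 hF)
  have hF_mem : F ∈ closure (s \ {0}) := (hs.sdiff_singleton 0).closure_eq ▸ Set.mem_univ F
  have hcl := hcont.continuousWithinAt.mem_closure_image hF_mem
  have hval : ⟪F, F⟫_ℝ / ‖F‖ = ‖F‖ := by
    rw [real_inner_self_eq_norm_sq, sq, mul_div_cancel_right₀ _ (norm_ne_zero_iff.2 hF)]
  rw [hval] at hcl
  exact ((isLUB_of_mem_closure hub hcl).csSup_eq (closure_nonempty_iff.1 ⟨_, hcl⟩)).symm

namespace NativeSpace

variable {Ω : Type*} {κ : Ω → Ω → ℝ} {H : Type*} [NormedAddCommGroup H]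
  [InnerProductSpace ℝ H] [CompleteSpace H] (ns : NativeSpace Ω κ H)

theorem inner_sum_feature (F : H) {N : ℕ} (α : Fin N → ℝ) (x : Fin N → Ω) :
    ⟪F, ∑ j, α j • ns.feature (x j)⟫_ℝ = ∑ j, α j * ns.eval F (x j) := by
  simp only [inner_sum, real_inner_smul_right, ns.reproducing]

theorem exists_eval_eq_of_abs_sum_le (f : Ω → ℝ) (C : ℝ)
    (hf : ∀ (N : ℕ) (α : Fin N → ℝ) (x : Fin N → Ω),
      |∑ j, α j * f (x j)| ≤ C * ‖∑ j, α j • ns.feature (x j)‖) :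
    ∃ F : H, ns.eval F = f := by
  obtain ⟨F, hF⟩ := exists_inner_eq_of_abs_sum_le ns.feature f C hf
  exact ⟨F, funext fun x => (ns.reproducing F x).symm.trans (hF x)⟩

theorem setOf_ratio_eq_image (F : H) :
    {r : ℝ | ∃ (N : ℕ) (α : Fin N → ℝ) (x : Fin N → Ω),
        (∑ j, α j • ns.feature (x j)) ≠ 0 ∧
        r = (∑ j, α j * ns.eval F (x j)) / ‖∑ j, α j • ns.feature (x j)‖} =
      (fun g => ⟪F, g⟫_ℝ / ‖g‖) ''
        ((Submodule.span ℝ (Set.range ns.feature) : Set H) \ {0}) := by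
  ext r
  constructor
  · rintro ⟨N, α, x, hne, rfl⟩
    exact ⟨_, ⟨Submodule.mem_span_range_iff_exists_fin_sum.2 ⟨N, α, x, rfl⟩, hne⟩,
      by simp only [inner_sum_feature]⟩
  · rintro ⟨g, ⟨hg, hg0⟩, rfl⟩
    obtain ⟨N, α, x, rfl⟩ := Submodule.mem_span_range_iff_exists_fin_sum.1 hg
    exact ⟨N, α, x, hg0, by simp only [inner_sum_feature]⟩

end NativeSpace

theorem madych_nelson_characterization_general {Ω : Type*} {κ : Ω → Ω → ℝ}
    {H : Type*} [NormedAddCommGroup H] [InnerProductSpace ℝ H]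
    [CompleteSpace H] (ns : NativeSpace Ω κ H) :
    (∀ f : Ω → ℝ,
      (∃ F : H, ns.eval F = f) ↔
        ∃ C : ℝ, ∀ (N : ℕ) (α : Fin N → ℝ) (x : Fin N → Ω),
          |∑ j, α j * f (x j)| ≤ C * ‖∑ j, α j • ns.feature (x j)‖) ∧
    (∀ F : H, ‖F‖ = sSup {r : ℝ | ∃ (N : ℕ) (α : Fin N → ℝ) (x : Fin N → Ω),
        (∑ j, α j • ns.feature (x j)) ≠ 0 ∧
        r = (∑ j, α j * ns.eval F (x j)) / ‖∑ j, α j • ns.feature (x j)‖}) := by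
  refine ⟨fun f => ⟨?_, fun ⟨C, hC⟩ => ns.exists_eval_eq_of_abs_sum_le f C hC⟩, fun F => ?_⟩
  · rintro ⟨F, rfl⟩
    refine ⟨‖F‖, fun N α x => ?_⟩
    rw [← ns.inner_sum_feature]
    exact abs_real_inner_le_norm F _
  · rw [ns.setOf_ratio_eq_image]
    exact norm_eq_sSup_inner_div_norm ns.dense_span F

/-- Madych–Nelson variational characterization of the native space. A function
`f : Ω → ℝ` belongs to `N_κ` iff `|λ(f)| ≤ C_f ‖λ‖_{N_κ*}` for all finite linear
combinations `λ = ∑ αⱼ δ_{xⱼ}` of point evaluations, where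
`‖λ‖_{N_κ*} = ‖∑ αⱼ κ(·,xⱼ)‖_{N_κ}`; and in that case
`‖f‖_{N_κ} = sup_{λ ≠ 0} λ(f)/‖λ‖_{N_κ*}`. -/
theorem madych_nelson_characterization {Ω : Type*} [Nonempty Ω] {κ : Ω → Ω → ℝ}
    (hκ : IsPosDefKernel κ) {H : Type*} [NormedAddCommGroup H] [InnerProductSpace ℝ H]
    [CompleteSpace H] (ns : NativeSpace Ω κ H) :
    (∀ f : Ω → ℝ,
      (∃ F : H, ns.eval F = f) ↔
        ∃ C : ℝ, ∀ (N : ℕ) (α : Fin N → ℝ) (x : Fin N → Ω),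
          |∑ j, α j * f (x j)| ≤ C * ‖∑ j, α j • ns.feature (x j)‖) ∧
    (∀ F : H, ‖F‖ = sSup {r : ℝ | ∃ (N : ℕ) (α : Fin N → ℝ) (x : Fin N → Ω),
        (∑ j, α j • ns.feature (x j)) ≠ 0 ∧
        r = (∑ j, α j * ns.eval F (x j)) / ‖∑ j, α j • ns.feature (x j)‖}) :=
  madych_nelson_characterization_general ns
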